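/- arXiv:2306.09809 — 2 statements merged into one kernel-verified Lean document; each statement's English description precedes it below -/
import Mathlib

section
/- Let I be an independent family of subsets of ℕ. Every diagonalization filter F for I satisfies fil(I) ⊆ F. -/
open Set

/-- A family of subsets of ℕ is *independent* if all its members are infinite and
for all finite disjoint subfamilies `𝒜, ℬ ⊆ I` the set `⋂ 𝒜 \ ⋃ ℬ` is infinite. -/
def Indep (I : Set (Set ℕ)) : Prop :=
  (∀ A ∈ I, A.Infinite) ∧
  ∀ 𝒜 ℬ : Finset (Set ℕ), ↑𝒜 ⊆ I → ↑ℬ ⊆ I → Disjoint 𝒜 ℬ →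
    ((⋂ A ∈ 𝒜, A) \ (⋃ B ∈ ℬ, B)).Infinite

/-- `FF I h` : `h` is a finite partial function from `I` to `2`, coded as a finitely
supported `Option Bool`-valued function whose support consists of members of `I`. -/
def FF (I : Set (Set ℕ)) (h : Set ℕ → Option Bool) : Prop :=
  {A | h A ≠ none}.Finite ∧ ∀ A : Set ℕ, h A ≠ none → A ∈ I

/-- The Boolean combination `I^h` : intersection over the domain of `h` of `A` (if
`h A = some false`, i.e. `h(A) = 0`) or of its complement (if `h A = some true`). -/
def BC (h : Set ℕ → Option Bool) : Set ℕ :=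
  ⋂ A ∈ {A : Set ℕ | h A ≠ none}, (if h A = some false then A else Aᶜ)

/-- `ExtFF h h'` : the finite partial function `h'` extends `h`. -/
def ExtFF (h h' : Set ℕ → Option Bool) : Prop :=
  ∀ (A : Set ℕ) (b : Bool), h A = some b → h' A = some b

/-- `I` is densely maximal: for every infinite `X ⊆ ℕ` and every `h ∈ FF(I)` there is
`h' ⊇ h` in `FF(I)` with `I^{h'} \ X` finite or `I^{h'} ∩ X` finite. -/
def DenselyMax (I : Set (Set ℕ)) : Prop :=
  ∀ X : Set ℕ, X.Infinite → ∀ h, FF I h →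
    ∃ h', FF I h' ∧ ExtFF h h' ∧ ((BC h' \ X).Finite ∨ (BC h' ∩ X).Finite)

/-- The density filter `fil(I)`. -/
def densityFil (I : Set (Set ℕ)) : Set (Set ℕ) :=
  {X | ∀ h, FF I h → ∃ h', FF I h' ∧ ExtFF h h' ∧ (BC h' \ X).Finite}

/-- `I` is a maximal independent family. -/
def MaxIndep (I : Set (Set ℕ)) : Prop :=
  Indep I ∧ ¬ ∃ X : Set ℕ, X.Infinite ∧ X ∉ I ∧ Indep (insert X I)

/-- A proper filter on ℕ, viewed as a collection of subsets of ℕ. -/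
def ProperFilter (F : Set (Set ℕ)) : Prop :=
  ∅ ∉ F ∧ Set.univ ∈ F ∧ (∀ X ∈ F, ∀ Y : Set ℕ, X ⊆ Y → Y ∈ F) ∧
    ∀ X ∈ F, ∀ Y ∈ F, X ∩ Y ∈ F

/-- Every member of `F` has infinite intersection with every Boolean combination of `I`. -/
def DiagProp (I : Set (Set ℕ)) (F : Set (Set ℕ)) : Prop :=
  ∀ X ∈ F, ∀ h, FF I h → (X ∩ BC h).Infinite

/-- `F` is a diagonalization filter for `I` : a proper filter, maximal under inclusion
among proper filters all of whose members meet every Boolean combination infinitely. -/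
def DiagFilter (I F : Set (Set ℕ)) : Prop :=
  ProperFilter F ∧ DiagProp I F ∧
    ∀ G : Set (Set ℕ), ProperFilter G → DiagProp I G → F ⊆ G → G = F

/-- `F` is a P-filter (as a collection of sets): every countable subfamily has a
pseudointersection in `F`. -/
def IsPFilter (F : Set (Set ℕ)) : Prop :=
  ∀ A : ℕ → Set ℕ, (∀ n, A n ∈ F) → ∃ B ∈ F, ∀ n, (B \ A n).Finite

/-- `F` is a Q-filter: every partition of ℕ into finite sets has a semiselector in `F`. -/
def IsQFilter (F : Set (Set ℕ)) : Prop :=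
  ∀ J : ℕ → Set ℕ, (∀ n, (J n).Finite) → (∀ m n, m ≠ n → Disjoint (J m) (J n)) →
    (⋃ n, J n) = Set.univ → ∃ A ∈ F, ∀ n, (A ∩ J n).Subsingleton

/-- An independent family is selective if it is densely maximal and its density filter
is Ramsey (both a P-filter and a Q-filter). -/
def Selective (I : Set (Set ℕ)) : Prop :=
  Indep I ∧ DenselyMax I ∧ IsPFilter (densityFil I) ∧ IsQFilter (densityFil I)

lemma BC_mono {h h' : Set ℕ → Option Bool} (he : ExtFF h h') : BC h' ⊆ BC h := by
  intro x hx
  simp only [BC, Set.mem_iInter, Set.mem_setOf_eq] at hx ⊢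
  intro A hA
  obtain ⟨b, hb⟩ := Option.ne_none_iff_exists'.mp hA
  have h2 := he A b hb
  have := hx A (by simp [h2])
  rw [hb]
  rw [h2] at this
  exact this

theorem statement5 (I F : Set (Set ℕ)) (hI : Indep I) (hF : DiagFilter I F) :
    densityFil I ⊆ F := by
  intro X hX
  obtain ⟨⟨hFne, hFuniv, hFup, hFint⟩, hFdiag, hFmax⟩ := hF
  set G : Set (Set ℕ) := {Z | ∃ Y ∈ F, Y ∩ X ⊆ Z} with hG
  have key : ∀ Y ∈ F, ∀ h, FF I h → ((Y ∩ X) ∩ BC h).Infinite := by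
    intro Y hY h hh
    obtain ⟨h', hh', he, hfin⟩ := hX h hh
    have hinf := hFdiag Y hY h' hh'
    have h3 : ((Y ∩ BC h') \ (BC h' \ X)).Infinite := hinf.diff hfin
    apply h3.mono
    rintro x ⟨⟨hx1, hx2⟩, hx3⟩
    have hxX : x ∈ X := by
      by_contra hc
      exact hx3 ⟨hx2, hc⟩
    exact ⟨⟨hx1, hxX⟩, BC_mono he hx2⟩
  have hh0 : FF I (fun _ => none) := ⟨by simp, by simp⟩
  have hGproper : ProperFilter G := by
    refine ⟨?_, ⟨Set.univ, hFuniv, by simp⟩, ?_, ?_⟩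
    · rintro ⟨Y, hY, hsub⟩
      have := key Y hY _ hh0
      have hne : ((Y ∩ X) ∩ BC (fun _ => none)).Nonempty := this.nonempty
      obtain ⟨x, hx1, _⟩ := hne
      exact (hsub hx1).elim
    · rintro Z ⟨Y, hY, hsub⟩ W hZW
      exact ⟨Y, hY, hsub.trans hZW⟩
    · rintro Z1 ⟨Y1, hY1, hs1⟩ Z2 ⟨Y2, hY2, hs2⟩
      refine ⟨Y1 ∩ Y2, hFint Y1 hY1 Y2 hY2, ?_⟩
      rintro x ⟨⟨hx1, hx2⟩, hx3⟩
      exact ⟨hs1 ⟨hx1, hx3⟩, hs2 ⟨hx2, hx3⟩⟩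
  have hGdiag : DiagProp I G := by
    rintro Z ⟨Y, hY, hsub⟩ h hh
    apply (key Y hY h hh).mono
    rintro x ⟨hx1, hx2⟩
    exact ⟨hsub hx1, hx2⟩
  have hFG : F ⊆ G := fun Y hY => ⟨Y, hY, Set.inter_subset_left⟩
  have hGF : G = F := hFmax G hGproper hGdiag hFG
  have : X ∈ G := ⟨Set.univ, hFuniv, by simp⟩
  rwa [hGF] at this
end

section
/- (Steprāns) Let κ be a cardinal such that there exists a maximal independent family of subsets of ℕ of cardinality κ. Then there exists a maximal independent family of cardinality κ which is not densely maximal. -/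
open Set

def fibP (I : Set (Set ℕ)) (x : ℕ) : ℕ → Prop :=
  fun y => ∀ A ∈ I, (y ∈ A ↔ x ∈ A)

def splX (I : Set (Set ℕ)) : Set ℕ := {m | ∃ k, m = Nat.nth (fibP I m) (2 * k)}

lemma fibP_eq {I : Set (Set ℕ)} {x y : ℕ} (h : fibP I x y) : fibP I y = fibP I x := by
  funext z
  apply propext
  constructor
  · intro hz A hA; exact (hz A hA).trans (h A hA)
  · intro hz A hA; exact (hz A hA).trans (h A hA).symm

lemma fib_infinite {I : Set (Set ℕ)} (hI : Indep I) (hfin : I.Finite) (x : ℕ) :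
    (setOf (fibP I x)).Infinite := by
  classical
  set 𝒜 : Finset (Set ℕ) := hfin.toFinset.filter (fun A => x ∈ A) with h𝒜
  set ℬ : Finset (Set ℕ) := hfin.toFinset.filter (fun A => x ∉ A) with hℬ
  have h1 : setOf (fibP I x) = (⋂ A ∈ 𝒜, A) \ (⋃ B ∈ ℬ, B) := by
    ext y
    simp only [mem_setOf_eq, fibP, mem_diff, mem_iInter, mem_iUnion, h𝒜, hℬ,
      Finset.mem_filter, Set.Finite.mem_toFinset, not_exists]
    constructor
    · intro h
      constructor
      · rintro A ⟨hA, hxA⟩; exact (h A hA).2 hxA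
      · rintro A ⟨hA, hxA⟩ hyA; exact hxA ((h A hA).1 hyA)
    · rintro ⟨h1, h2⟩ A hA
      constructor
      · intro hyA; by_contra hxA; exact h2 A ⟨hA, hxA⟩ hyA
      · intro hxA; exact h1 A ⟨hA, hxA⟩
  rw [h1]
  refine hI.2 𝒜 ℬ ?_ ?_ ?_
  · intro A hA; simp only [h𝒜, Finset.coe_filter, mem_setOf_eq, Set.Finite.mem_toFinset] at hA
    exact hA.1
  · intro A hA; simp only [hℬ, Finset.coe_filter, mem_setOf_eq, Set.Finite.mem_toFinset] at hA
    exact hA.1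
  · rw [Finset.disjoint_left]
    intro A hA hA'
    rw [h𝒜, Finset.mem_filter] at hA
    rw [hℬ, Finset.mem_filter] at hA'
    exact hA'.2 hA.2

lemma combo_split {I : Set (Set ℕ)} (hI : Indep I) (hfin : I.Finite) (𝒜 ℬ : Finset (Set ℕ))
    (h𝒜 : ↑𝒜 ⊆ I) (hℬ : ↑ℬ ⊆ I) (hd : Disjoint 𝒜 ℬ) :
    (((⋂ A ∈ 𝒜, A) \ (⋃ B ∈ ℬ, B)) ∩ splX I).Infinite ∧
    (((⋂ A ∈ 𝒜, A) \ (⋃ B ∈ ℬ, B)) \ splX I).Infinite := by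
  obtain ⟨x, hx⟩ := (hI.2 𝒜 ℬ h𝒜 hℬ hd).nonempty
  have hinf := fib_infinite hI hfin x
  have hfib : setOf (fibP I x) ⊆ (⋂ A ∈ 𝒜, A) \ (⋃ B ∈ ℬ, B) := by
    intro y hy
    simp only [mem_diff, mem_iInter, mem_iUnion, not_exists] at hx ⊢
    constructor
    · intro A hA; exact (hy A (h𝒜 hA)).2 (hx.1 A hA)
    · intro A hA hyA; exact hx.2 A hA ((hy A (hℬ hA)).1 hyA)
  have hmem : ∀ k, fibP I x (Nat.nth (fibP I x) k) := fun k => Nat.nth_mem_of_infinite hinf k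
  constructor
  · have : range (fun k => Nat.nth (fibP I x) (2 * k)) ⊆
        ((⋂ A ∈ 𝒜, A) \ (⋃ B ∈ ℬ, B)) ∩ splX I := by
      rintro m ⟨k, rfl⟩
      refine ⟨hfib (hmem (2 * k)), ?_⟩
      exact ⟨k, by rw [fibP_eq (hmem (2 * k))]⟩
    refine Set.Infinite.mono this (Set.infinite_range_of_injective ?_)
    intro a b hab
    have := Nat.nth_injective hinf hab
    omega
  · have : range (fun k => Nat.nth (fibP I x) (2 * k + 1)) ⊆
        ((⋂ A ∈ 𝒜, A) \ (⋃ B ∈ ℬ, B)) \ splX I := by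
      rintro m ⟨k, rfl⟩
      refine ⟨hfib (hmem (2 * k + 1)), ?_⟩
      rintro ⟨k', hk'⟩
      rw [fibP_eq (hmem (2 * k + 1))] at hk'
      have := Nat.nth_injective hinf hk'.symm
      omega
    refine Set.Infinite.mono this (Set.infinite_range_of_injective ?_)
    intro a b hab
    have := Nat.nth_injective hinf hab
    omega

lemma maxIndep_infinite {I : Set (Set ℕ)} (hI : MaxIndep I) : I.Infinite := by
  classical
  by_contra hfin
  rw [Set.not_infinite] at hfin
  have hXinf : (splX I).Infinite := by
    have := (combo_split hI.1 hfin ∅ ∅ (by simp) (by simp) (by simp)).1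
    simpa using this
  have hXnotI : splX I ∉ I := by
    intro hX
    have := (combo_split hI.1 hfin ∅ {splX I} (by simp) (by simp [hX]) (by simp)).1
    simp only [Finset.notMem_empty, iInter_of_empty, iInter_univ, Finset.mem_singleton,
      iUnion_iUnion_eq_left] at this
    have h2 : (univ \ splX I) ∩ splX I = ∅ := by ext y; simp
    rw [h2] at this
    exact this (Set.finite_empty)
  refine hI.2 ⟨splX I, hXinf, hXnotI, ?_, ?_⟩
  · intro A hA
    rcases hA with rfl | hA
    · exact hXinf
    · exact hI.1.1 A hA
  · intro 𝒜 ℬ h𝒜 hℬ hd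
    by_cases hX𝒜 : splX I ∈ 𝒜
    · have h𝒜' : ↑(𝒜.erase (splX I)) ⊆ I := by
        intro A hA
        simp only [Finset.coe_erase, mem_diff, mem_singleton_iff] at hA
        rcases h𝒜 hA.1 with rfl | h; · exact absurd rfl hA.2
        · exact h
      have hℬ' : ↑ℬ ⊆ I := by
        intro A hA
        rcases hℬ hA with rfl | h
        · exact absurd (hd.forall_ne_finset hX𝒜 hA) (by simp)
        · exact h
      have key := (combo_split hI.1 hfin (𝒜.erase (splX I)) ℬ h𝒜' hℬ'
        (hd.mono_left (Finset.erase_subset _ _))).1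
      refine key.mono ?_
      intro y hy
      simp only [mem_inter_iff, mem_diff, mem_iInter, mem_iUnion, not_exists,
        Finset.mem_erase] at hy ⊢
      refine ⟨fun A hA => ?_, hy.1.2⟩
      by_cases hAX : A = splX I
      · subst hAX; exact hy.2
      · exact hy.1.1 A ⟨hAX, hA⟩
    · have h𝒜' : ↑𝒜 ⊆ I := by
        intro A hA
        rcases h𝒜 hA with rfl | h; · exact absurd hA hX𝒜
        · exact h
      by_cases hXℬ : splX I ∈ ℬ
      · have hℬ' : ↑(ℬ.erase (splX I)) ⊆ I := by
          intro A hA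
          simp only [Finset.coe_erase, mem_diff, mem_singleton_iff] at hA
          rcases hℬ hA.1 with rfl | h; · exact absurd rfl hA.2
          · exact h
        have key := (combo_split hI.1 hfin 𝒜 (ℬ.erase (splX I)) h𝒜' hℬ'
          (hd.mono_right (Finset.erase_subset _ _))).2
        refine key.mono ?_
        intro y hy
        simp only [mem_diff, mem_iInter, mem_iUnion, not_exists, Finset.mem_erase] at hy ⊢
        refine ⟨hy.1.1, fun A hA hyA => ?_⟩
        by_cases hAX : A = splX I
        · subst hAX; exact hy.2 hyA
        · exact hy.1.2 A ⟨hAX, hA⟩ hyA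
      · have hℬ' : ↑ℬ ⊆ I := by
          intro A hA
          rcases hℬ hA with rfl | h; · exact absurd hA hXℬ
          · exact h
        exact hI.1.2 𝒜 ℬ h𝒜' hℬ' hd

-- ### The three-region construction
def TT (U V W : Set ℕ) : Set ℕ :=
  {m | (m % 3 = 0 ∧ m / 3 ∈ U) ∨ (m % 3 = 1 ∧ m / 3 ∈ V) ∨ (m % 3 = 2 ∧ m / 3 ∈ W)}

def ctil (A : Set ℕ) : Set ℕ := TT A A A
def RR (A₀ : Set ℕ) : Set ℕ := TT A₀ A₀ A₀ᶜ
def SS (A₀ : Set ℕ) : Set ℕ := TT A₀ A₀ᶜ A₀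
def JJ (I : Set (Set ℕ)) (A₀ : Set ℕ) : Set (Set ℕ) :=
  (ctil '' (I \ {A₀})) ∪ {RR A₀, SS A₀}

lemma mem_TT {U V W : Set ℕ} {m : ℕ} :
    m ∈ TT U V W ↔ (m % 3 = 0 ∧ m / 3 ∈ U) ∨ (m % 3 = 1 ∧ m / 3 ∈ V) ∨ (m % 3 = 2 ∧ m / 3 ∈ W) :=
  Iff.rfl

lemma TT0 {U V W : Set ℕ} (a : ℕ) : 3 * a ∈ TT U V W ↔ a ∈ U := by
  have h1 : (3 * a) % 3 = 0 := by omega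
  have h2 : (3 * a) / 3 = a := by omega
  simp [mem_TT, h1, h2]

lemma TT1 {U V W : Set ℕ} (a : ℕ) : 3 * a + 1 ∈ TT U V W ↔ a ∈ V := by
  have h1 : (3 * a + 1) % 3 = 1 := by omega
  have h2 : (3 * a + 1) / 3 = a := by omega
  simp [mem_TT, h1, h2]

lemma TT2 {U V W : Set ℕ} (a : ℕ) : 3 * a + 2 ∈ TT U V W ↔ a ∈ W := by
  have h1 : (3 * a + 2) % 3 = 2 := by omega
  have h2 : (3 * a + 2) / 3 = a := by omega
  simp [mem_TT, h1, h2]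

lemma mem_ctil {A : Set ℕ} {m : ℕ} : m ∈ ctil A ↔ m / 3 ∈ A := by
  have : m % 3 = 0 ∨ m % 3 = 1 ∨ m % 3 = 2 := by omega
  rcases this with h | h | h <;> simp [ctil, mem_TT, h]

-- decode maps
def dq (M : Set ℕ) : Set ℕ := {a | 3 * a ∈ M}
def dp (M : Set ℕ) : Set ℕ := {a | 3 * a + 1 ∈ M}
def dr (M : Set ℕ) : Set ℕ := {a | 3 * a + 2 ∈ M}

@[simp] lemma dq_ctil (B : Set ℕ) : dq (ctil B) = B := by ext a; simp [dq, TT0, ctil]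
@[simp] lemma dq_RR (A₀ : Set ℕ) : dq (RR A₀) = A₀ := by ext a; simp [dq, RR, TT0]
@[simp] lemma dq_SS (A₀ : Set ℕ) : dq (SS A₀) = A₀ := by ext a; simp [dq, SS, TT0]
@[simp] lemma dp_ctil (B : Set ℕ) : dp (ctil B) = B := by ext a; simp [dp, TT1, ctil]
@[simp] lemma dp_RR (A₀ : Set ℕ) : dp (RR A₀) = A₀ := by ext a; simp [dp, RR, TT1]
@[simp] lemma dp_SS (A₀ : Set ℕ) : dp (SS A₀) = A₀ᶜ := by ext a; simp [dp, SS, TT1]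
@[simp] lemma dr_ctil (B : Set ℕ) : dr (ctil B) = B := by ext a; simp [dr, TT2, ctil]
@[simp] lemma dr_RR (A₀ : Set ℕ) : dr (RR A₀) = A₀ᶜ := by ext a; simp [dr, RR, TT2]
@[simp] lemma dr_SS (A₀ : Set ℕ) : dr (SS A₀) = A₀ := by ext a; simp [dr, SS, TT2]

lemma mem_dq {M : Set ℕ} {a : ℕ} : a ∈ dq M ↔ 3 * a ∈ M := Iff.rfl
lemma mem_dp {M : Set ℕ} {a : ℕ} : a ∈ dp M ↔ 3 * a + 1 ∈ M := Iff.rfl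
lemma mem_dr {M : Set ℕ} {a : ℕ} : a ∈ dr M ↔ 3 * a + 2 ∈ M := Iff.rfl

lemma mem_JJ_elim {I : Set (Set ℕ)} {A₀ M : Set ℕ} (h : M ∈ JJ I A₀) :
    M = RR A₀ ∨ M = SS A₀ ∨ ∃ B ∈ I, B ≠ A₀ ∧ M = ctil B := by
  rcases h with ⟨B, hB, rfl⟩ | h
  · exact Or.inr (Or.inr ⟨B, hB.1, hB.2, rfl⟩)
  · rcases h with h | h
    · exact Or.inl h
    · exact Or.inr (Or.inl h)

lemma ctil_inj {B B' : Set ℕ} (h : ctil B = ctil B') : B = B' := by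
  have := congrArg dq h; simpa using this

lemma ctil_ne_RR {B A₀ : Set ℕ} (hB : B ≠ A₀) : ctil B ≠ RR A₀ := by
  intro h; exact hB (by simpa using congrArg dq h)

lemma ctil_ne_SS {B A₀ : Set ℕ} (hB : B ≠ A₀) : ctil B ≠ SS A₀ := by
  intro h; exact hB (by simpa using congrArg dq h)

lemma RR_ne_SS {A₀ : Set ℕ} (h : A₀.Nonempty) : RR A₀ ≠ SS A₀ := by
  intro he
  have := congrArg dp he
  simp only [dp_RR, dp_SS] at this
  obtain ⟨a, ha⟩ := h
  have ha' : a ∈ A₀ᶜ := this ▸ ha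
  exact ha' ha

lemma mem_combo {𝒜 ℬ : Finset (Set ℕ)} {m : ℕ} :
    m ∈ (⋂ A ∈ 𝒜, A) \ (⋃ B ∈ ℬ, B) ↔ (∀ A ∈ 𝒜, m ∈ A) ∧ ∀ B ∈ ℬ, m ∉ B := by
  simp [Set.mem_iInter, Set.mem_iUnion, not_exists]

lemma infinite_of_sub3 {U T : Set ℕ} (i : ℕ) (hU : U.Infinite)
    (h : ∀ a ∈ U, 3 * a + i ∈ T) : T.Infinite := by
  have hinj : Function.Injective (fun a => 3 * a + i) := by
    intro a b hab
    have hab' : 3 * a + i = 3 * b + i := hab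
    omega
  refine Set.Infinite.mono ?_ (hU.image hinj.injOn)
  rintro m ⟨a, ha, rfl⟩
  exact h a ha

lemma A0_notmem_I_compl {I : Set (Set ℕ)} (hI : Indep I) {A₀ : Set ℕ} (hA₀ : A₀ ∈ I) :
    A₀ᶜ ∉ I := by
  intro hc
  classical
  have := hI.2 {A₀, A₀ᶜ} ∅ (by intro A hA; simp at hA; rcases hA with rfl | rfl <;> assumption)
    (by simp) (by simp)
  obtain ⟨y, hy⟩ := this.nonempty
  rw [mem_combo] at hy
  exact (hy.1 A₀ᶜ (by simp)) (hy.1 A₀ (by simp))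

theorem indep_JJ {I : Set (Set ℕ)} (hI : Indep I) {A₀ : Set ℕ} (hA₀ : A₀ ∈ I) :
    Indep (JJ I A₀) := by
  classical
  have hA₀ne : A₀.Nonempty := (hI.1 A₀ hA₀).nonempty
  constructor
  · intro M hM
    rcases mem_JJ_elim hM with rfl | rfl | ⟨B, hB, _, rfl⟩
    · exact infinite_of_sub3 0 (hI.1 A₀ hA₀) (fun a ha => (TT0 a).2 ha)
    · exact infinite_of_sub3 0 (hI.1 A₀ hA₀) (fun a ha => (TT0 a).2 ha)
    · exact infinite_of_sub3 0 (hI.1 B hB) (fun a ha => (TT0 a).2 ha)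
  · intro 𝒜 ℬ h𝒜 hℬ hd
    rw [Finset.disjoint_left] at hd
    by_cases hc2 : RR A₀ ∈ 𝒜 ∧ SS A₀ ∈ ℬ
    · -- use region 1 (dp); A₀ positively from RR
      set 𝒜₁ := 𝒜.image dp with h𝒜₁
      set ℬ₁ := (ℬ.erase (SS A₀)).image dp with hℬ₁
      have hS𝒜 : SS A₀ ∉ 𝒜 := fun h => hd h hc2.2
      have hRℬ : RR A₀ ∉ ℬ := fun h => hd hc2.1 h
      have h𝒜₁I : ↑𝒜₁ ⊆ I := by
        intro D hD
        simp only [h𝒜₁, Finset.coe_image, mem_image, Finset.mem_coe] at hD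
        obtain ⟨M, hM, rfl⟩ := hD
        rcases mem_JJ_elim (h𝒜 hM) with rfl | rfl | ⟨B, hB, _, rfl⟩
        · simpa using hA₀
        · exact absurd hM hS𝒜
        · simpa using hB
      have hℬ₁I : ↑ℬ₁ ⊆ I := by
        intro D hD
        simp only [hℬ₁, Finset.coe_image, mem_image, Finset.mem_coe] at hD
        obtain ⟨M, hM, rfl⟩ := hD
        have hM' := Finset.mem_of_mem_erase hM
        rcases mem_JJ_elim (hℬ hM') with rfl | rfl | ⟨B, hB, _, rfl⟩
        · exact absurd hM' hRℬ
        · exact absurd rfl (Finset.ne_of_mem_erase hM)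
        · simpa using hB
      have hdisj : Disjoint 𝒜₁ ℬ₁ := by
        rw [Finset.disjoint_left]
        intro D hD1 hD2
        simp only [h𝒜₁, hℬ₁, Finset.mem_image] at hD1 hD2
        obtain ⟨M₁, hM₁, hdM₁⟩ := hD1
        obtain ⟨M₂, hM₂, hdM₂⟩ := hD2
        have hM₂' := Finset.mem_of_mem_erase hM₂
        -- M₂ must be a ctil
        rcases mem_JJ_elim (hℬ hM₂') with rfl | rfl | ⟨B₂, hB₂, hB₂ne, rfl⟩
        · exact hRℬ hM₂'
        · exact Finset.ne_of_mem_erase hM₂ rfl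
        · rcases mem_JJ_elim (h𝒜 hM₁) with rfl | rfl | ⟨B₁, hB₁, hB₁ne, rfl⟩
          · rw [dp_RR] at hdM₁; rw [dp_ctil] at hdM₂
            exact hB₂ne (hdM₂.trans hdM₁.symm)
          · exact hS𝒜 hM₁
          · rw [dp_ctil] at hdM₁ hdM₂
            have hBB : B₁ = B₂ := hdM₁.trans hdM₂.symm
            subst hBB
            exact hd hM₁ hM₂'
      have key := hI.2 𝒜₁ ℬ₁ h𝒜₁I hℬ₁I hdisj
      refine infinite_of_sub3 1 key ?_
      intro a ha
      rw [mem_combo] at ha ⊢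
      constructor
      · intro M hM
        have : dp M ∈ 𝒜₁ := Finset.mem_image_of_mem dp hM
        exact ha.1 (dp M) this
      · intro M hM hmem
        by_cases hMS : M = SS A₀
        · subst hMS
          rw [← mem_dp, dp_SS] at hmem
          have hA₀mem : A₀ ∈ 𝒜₁ := by
            rw [h𝒜₁, Finset.mem_image]
            exact ⟨RR A₀, hc2.1, by simp⟩
          exact hmem (ha.1 A₀ hA₀mem)
        · have : dp M ∈ ℬ₁ := by
            rw [hℬ₁, Finset.mem_image]
            exact ⟨M, Finset.mem_erase.2 ⟨hMS, hM⟩, rfl⟩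
          exact ha.2 (dp M) this hmem
    · by_cases hc3 : SS A₀ ∈ 𝒜 ∧ RR A₀ ∈ ℬ
      · -- region 1, A₀ negatively from RR ∈ ℬ
        set 𝒜₁ := (𝒜.erase (SS A₀)).image dp with h𝒜₁
        set ℬ₁ := ℬ.image dp with hℬ₁
        have hR𝒜 : RR A₀ ∉ 𝒜 := fun h => hd h hc3.2
        have hSℬ : SS A₀ ∉ ℬ := fun h => hd hc3.1 h
        have h𝒜₁I : ↑𝒜₁ ⊆ I := by
          intro D hD
          simp only [h𝒜₁, Finset.coe_image, mem_image, Finset.mem_coe] at hD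
          obtain ⟨M, hM, rfl⟩ := hD
          have hM' := Finset.mem_of_mem_erase hM
          rcases mem_JJ_elim (h𝒜 hM') with rfl | rfl | ⟨B, hB, _, rfl⟩
          · exact absurd hM' hR𝒜
          · exact absurd rfl (Finset.ne_of_mem_erase hM)
          · simpa using hB
        have hℬ₁I : ↑ℬ₁ ⊆ I := by
          intro D hD
          simp only [hℬ₁, Finset.coe_image, mem_image, Finset.mem_coe] at hD
          obtain ⟨M, hM, rfl⟩ := hD
          rcases mem_JJ_elim (hℬ hM) with rfl | rfl | ⟨B, hB, _, rfl⟩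
          · simpa using hA₀
          · exact absurd hM hSℬ
          · simpa using hB
        have hdisj : Disjoint 𝒜₁ ℬ₁ := by
          rw [Finset.disjoint_left]
          intro D hD1 hD2
          simp only [h𝒜₁, hℬ₁, Finset.mem_image] at hD1 hD2
          obtain ⟨M₁, hM₁, hdM₁⟩ := hD1
          obtain ⟨M₂, hM₂, hdM₂⟩ := hD2
          have hM₁' := Finset.mem_of_mem_erase hM₁
          rcases mem_JJ_elim (h𝒜 hM₁') with rfl | rfl | ⟨B₁, hB₁, hB₁ne, rfl⟩
          · exact hR𝒜 hM₁'
          · exact Finset.ne_of_mem_erase hM₁ rfl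
          · rcases mem_JJ_elim (hℬ hM₂) with rfl | rfl | ⟨B₂, hB₂, hB₂ne, rfl⟩
            · rw [dp_ctil] at hdM₁; rw [dp_RR] at hdM₂
              exact hB₁ne (hdM₁.trans hdM₂.symm)
            · exact hSℬ hM₂
            · rw [dp_ctil] at hdM₁ hdM₂
              have hBB : B₁ = B₂ := hdM₁.trans hdM₂.symm
              subst hBB
              exact hd hM₁' hM₂
        have key := hI.2 𝒜₁ ℬ₁ h𝒜₁I hℬ₁I hdisj
        refine infinite_of_sub3 1 key ?_
        intro a ha
        rw [mem_combo] at ha ⊢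
        constructor
        · intro M hM
          by_cases hMS : M = SS A₀
          · subst hMS
            rw [← mem_dp, dp_SS]
            have hA₀mem : A₀ ∈ ℬ₁ := by
              rw [hℬ₁, Finset.mem_image]
              exact ⟨RR A₀, hc3.2, by simp⟩
            exact ha.2 A₀ hA₀mem
          · have hmem1 : dp M ∈ 𝒜₁ := by
              rw [h𝒜₁, Finset.mem_image]
              exact ⟨M, Finset.mem_erase.2 ⟨hMS, hM⟩, rfl⟩
            exact ha.1 (dp M) hmem1
        · intro M hM hmem
          exact ha.2 (dp M) (Finset.mem_image_of_mem dp hM) hmem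
      · -- region 0
        set 𝒜₀ := 𝒜.image dq with h𝒜₀
        set ℬ₀ := ℬ.image dq with hℬ₀
        have h𝒜₀I : ↑𝒜₀ ⊆ I := by
          intro D hD
          simp only [h𝒜₀, Finset.coe_image, mem_image, Finset.mem_coe] at hD
          obtain ⟨M, hM, rfl⟩ := hD
          rcases mem_JJ_elim (h𝒜 hM) with rfl | rfl | ⟨B, hB, _, rfl⟩
          · simpa using hA₀
          · simpa using hA₀
          · simpa using hB
        have hℬ₀I : ↑ℬ₀ ⊆ I := by
          intro D hD
          simp only [hℬ₀, Finset.coe_image, mem_image, Finset.mem_coe] at hD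
          obtain ⟨M, hM, rfl⟩ := hD
          rcases mem_JJ_elim (hℬ hM) with rfl | rfl | ⟨B, hB, _, rfl⟩
          · simpa using hA₀
          · simpa using hA₀
          · simpa using hB
        have hdisj : Disjoint 𝒜₀ ℬ₀ := by
          rw [Finset.disjoint_left]
          intro D hD1 hD2
          simp only [h𝒜₀, hℬ₀, Finset.mem_image] at hD1 hD2
          obtain ⟨M₁, hM₁, hdM₁⟩ := hD1
          obtain ⟨M₂, hM₂, hdM₂⟩ := hD2
          rcases mem_JJ_elim (h𝒜 hM₁) with rfl | rfl | ⟨B₁, hB₁, hB₁ne, rfl⟩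
          · rcases mem_JJ_elim (hℬ hM₂) with rfl | rfl | ⟨B₂, hB₂, hB₂ne, rfl⟩
            · exact hd hM₁ hM₂
            · exact hc2 ⟨hM₁, hM₂⟩
            · rw [dq_RR] at hdM₁; rw [dq_ctil] at hdM₂
              exact hB₂ne (hdM₂.trans hdM₁.symm)
          · rcases mem_JJ_elim (hℬ hM₂) with rfl | rfl | ⟨B₂, hB₂, hB₂ne, rfl⟩
            · exact hc3 ⟨hM₁, hM₂⟩
            · exact hd hM₁ hM₂
            · rw [dq_SS] at hdM₁; rw [dq_ctil] at hdM₂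
              exact hB₂ne (hdM₂.trans hdM₁.symm)
          · rcases mem_JJ_elim (hℬ hM₂) with rfl | rfl | ⟨B₂, hB₂, hB₂ne, rfl⟩
            · rw [dq_ctil] at hdM₁; rw [dq_RR] at hdM₂
              exact hB₁ne (hdM₁.trans hdM₂.symm)
            · rw [dq_ctil] at hdM₁; rw [dq_SS] at hdM₂
              exact hB₁ne (hdM₁.trans hdM₂.symm)
            · rw [dq_ctil] at hdM₁ hdM₂
              have hBB : B₁ = B₂ := hdM₁.trans hdM₂.symm
              subst hBB
              exact hd hM₁ hM₂
        have key := hI.2 𝒜₀ ℬ₀ h𝒜₀I hℬ₀I hdisj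
        refine infinite_of_sub3 0 key ?_
        intro a ha
        rw [mem_combo] at ha ⊢
        have h3a : ∀ M : Set ℕ, M ∈ JJ I A₀ → (3 * a + 0 ∈ M ↔ a ∈ dq M) := by
          intro M hM
          rcases mem_JJ_elim hM with rfl | rfl | ⟨B, hB, _, rfl⟩ <;>
            simp [RR, SS, ctil, TT0, mem_dq]
        constructor
        · intro M hM
          exact (h3a M (h𝒜 hM)).2 (ha.1 (dq M) (Finset.mem_image_of_mem dq hM))
        · intro M hM hmem
          exact ha.2 (dq M) (Finset.mem_image_of_mem dq hM) ((h3a M (hℬ hM)).1 hmem)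

lemma RS_pos {A₀ : Set ℕ} {m : ℕ} (h1 : m ∈ RR A₀) (h2 : m ∈ SS A₀) :
    m % 3 = 0 ∧ m / 3 ∈ A₀ := by
  have h3 : m % 3 = 0 ∨ m % 3 = 1 ∨ m % 3 = 2 := by omega
  rcases h3 with h | h | h <;>
    simp only [RR, SS, mem_TT, h] at h1 h2 <;> simp_all

lemma RS_neg {A₀ : Set ℕ} {m : ℕ} (h1 : m ∉ RR A₀) (h2 : m ∉ SS A₀) :
    m % 3 = 0 ∧ m / 3 ∉ A₀ := by
  have h3 : m % 3 = 0 ∨ m % 3 = 1 ∨ m % 3 = 2 := by omega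
  rcases h3 with h | h | h <;>
    simp only [RR, SS, mem_TT, h] at h1 h2 <;> simp_all [mem_compl_iff]

lemma dq_mem0 {m : ℕ} {Y : Set ℕ} (h0 : m % 3 = 0) : m ∈ Y ↔ m / 3 ∈ dq Y := by
  rw [mem_dq]
  have h : 3 * (m / 3) = m := by omega
  rw [h]

lemma inf_pull0 {V T : Set ℕ} (hT : T.Infinite) (h : ∀ m ∈ T, m % 3 = 0 ∧ m / 3 ∈ V) :
    V.Infinite := by
  have hsub : T ⊆ (fun a => 3 * a) '' V := by
    intro m hm
    exact ⟨m / 3, (h m hm).2, by have := (h m hm).1; simp; omega⟩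
  exact Set.Infinite.of_image _ (hT.mono hsub)

theorem maxJJ {I : Set (Set ℕ)} (hI : MaxIndep I) {A₀ : Set ℕ} (hA₀ : A₀ ∈ I) :
    ¬ ∃ Y : Set ℕ, Y.Infinite ∧ Y ∉ JJ I A₀ ∧ Indep (insert Y (JJ I A₀)) := by
  classical
  rintro ⟨Y, hYinf, hYJ, hYind⟩
  set Zq := dq Y with hZq
  have hJsub : JJ I A₀ ⊆ insert Y (JJ I A₀) := subset_insert _ _
  have hRJ : RR A₀ ∈ JJ I A₀ := Or.inr (Or.inl rfl)
  have hSJ : SS A₀ ∈ JJ I A₀ := Or.inr (Or.inr rfl)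
  have hctilJ : ∀ B ∈ I, B ≠ A₀ → ctil B ∈ JJ I A₀ := fun B hB hne => Or.inl ⟨B, ⟨hB, hne⟩, rfl⟩
  have hYneR : Y ≠ RR A₀ := fun h => hYJ (h ▸ hRJ)
  have hYneS : Y ≠ SS A₀ := fun h => hYJ (h ▸ hSJ)
  have hYnectil : ∀ B ∈ I, B ≠ A₀ → Y ≠ ctil B := fun B hB hne h => hYJ (h ▸ hctilJ B hB hne)
  -- Step 1 : Zq splits every Boolean combination of I
  have step1 : ∀ 𝒜 ℬ : Finset (Set ℕ), ↑𝒜 ⊆ I → ↑ℬ ⊆ I → Disjoint 𝒜 ℬ →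
      (((⋂ A ∈ 𝒜, A) \ (⋃ B ∈ ℬ, B)) ∩ Zq).Infinite ∧
      (((⋂ A ∈ 𝒜, A) \ (⋃ B ∈ ℬ, B)) \ Zq).Infinite := by
    intro 𝒜 ℬ h𝒜 hℬ hd
    rw [Finset.disjoint_left] at hd
    by_cases hA₀ℬ : A₀ ∈ ℬ
    · -- A₀ on the negative side; use RR, SS negatively
      have hA₀𝒜 : A₀ ∉ 𝒜 := fun h => hd h hA₀ℬ
      have hGB : ↑((ℬ.erase A₀).image ctil) ⊆ JJ I A₀ := by
        intro D hD
        simp only [Finset.coe_image, mem_image, Finset.mem_coe, Finset.mem_erase] at hD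
        obtain ⟨B, ⟨hBne, hB⟩, rfl⟩ := hD
        exact hctilJ B (hℬ hB) hBne
      have hGA : ↑(𝒜.image ctil) ⊆ JJ I A₀ := by
        intro D hD
        simp only [Finset.coe_image, mem_image, Finset.mem_coe] at hD
        obtain ⟨B, hB, rfl⟩ := hD
        exact hctilJ B (h𝒜 hB) (fun h => hA₀𝒜 (h ▸ hB))
      have hdisj12 : ∀ B₁ ∈ 𝒜, ∀ B₂ ∈ ℬ.erase A₀, ctil B₁ ≠ ctil B₂ := by
        intro B₁ hB₁ B₂ hB₂ h
        have := ctil_inj h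
        subst this
        exact hd hB₁ (Finset.mem_of_mem_erase hB₂)
      have hRnotA : RR A₀ ∉ 𝒜.image ctil := by
        rw [Finset.mem_image]
        rintro ⟨B, hB, h⟩
        have hBA : B = A₀ := by simpa using congrArg dq h
        exact hA₀𝒜 (hBA ▸ hB)
      have hSnotA : SS A₀ ∉ 𝒜.image ctil := by
        rw [Finset.mem_image]
        rintro ⟨B, hB, h⟩
        have hBA : B = A₀ := by simpa using congrArg dq h
        exact hA₀𝒜 (hBA ▸ hB)
      constructor
      · -- intersection with Zq
        set 𝒜J : Finset (Set ℕ) := insert Y (𝒜.image ctil) with h𝒜J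
        set ℬJ : Finset (Set ℕ) :=
          insert (RR A₀) (insert (SS A₀) ((ℬ.erase A₀).image ctil)) with hℬJ
        have hsubA : ↑𝒜J ⊆ insert Y (JJ I A₀) := by
          intro D hD
          rcases Finset.mem_insert.1 hD with rfl | hD
          · exact mem_insert _ _
          · exact hJsub (hGA hD)
        have hsubB : ↑ℬJ ⊆ insert Y (JJ I A₀) := by
          intro D hD
          rcases Finset.mem_insert.1 hD with rfl | hD
          · exact hJsub hRJ
          rcases Finset.mem_insert.1 hD with rfl | hD
          · exact hJsub hSJ
          · exact hJsub (hGB hD)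
        have hdj : Disjoint 𝒜J ℬJ := by
          rw [Finset.disjoint_left]
          intro D hD1 hD2
          rcases Finset.mem_insert.1 hD1 with rfl | hD1
          · rcases Finset.mem_insert.1 hD2 with rfl | hD2
            · exact hYneR rfl
            rcases Finset.mem_insert.1 hD2 with rfl | hD2
            · exact hYneS rfl
            · rw [Finset.mem_image] at hD2
              obtain ⟨B, hB, rfl⟩ := hD2
              exact hYnectil B (hℬ (Finset.mem_of_mem_erase hB)) (Finset.mem_erase.1 hB).1 rfl
          · rw [Finset.mem_image] at hD1
            obtain ⟨B₁, hB₁, rfl⟩ := hD1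
            have hB₁ne : B₁ ≠ A₀ := fun h => hA₀𝒜 (h ▸ hB₁)
            rcases Finset.mem_insert.1 hD2 with h | hD2
            · exact ctil_ne_RR hB₁ne h
            rcases Finset.mem_insert.1 hD2 with h | hD2
            · exact ctil_ne_SS hB₁ne h
            · rw [Finset.mem_image] at hD2
              obtain ⟨B₂, hB₂, h⟩ := hD2
              exact hdisj12 B₁ hB₁ B₂ hB₂ h.symm
        have key := hYind.2 𝒜J ℬJ hsubA hsubB hdj
        refine inf_pull0 key ?_
        intro m hm
        rw [mem_combo] at hm
        have hmY : m ∈ Y := hm.1 Y (Finset.mem_insert_self _ _)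
        have hmR : m ∉ RR A₀ := hm.2 _ (Finset.mem_insert_self _ _)
        have hmS : m ∉ SS A₀ := hm.2 _ (Finset.mem_insert.2 (Or.inr (Finset.mem_insert_self _ _)))
        obtain ⟨h0, hA0⟩ := RS_neg hmR hmS
        refine ⟨h0, ?_, (dq_mem0 h0).1 hmY⟩
        rw [mem_combo]
        constructor
        · intro A hA
          have := hm.1 (ctil A) (Finset.mem_insert.2 (Or.inr (Finset.mem_image_of_mem _ hA)))
          rwa [mem_ctil] at this
        · intro B hB
          by_cases hBA : B = A₀
          · subst hBA; exact hA0
          · intro hmem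
            have := hm.2 (ctil B)
              (Finset.mem_insert.2 (Or.inr (Finset.mem_insert.2 (Or.inr
                (Finset.mem_image_of_mem _ (Finset.mem_erase.2 ⟨hBA, hB⟩))))))
            exact this (mem_ctil.2 hmem)
      · -- difference with Zq
        set 𝒜J : Finset (Set ℕ) := 𝒜.image ctil with h𝒜J
        set ℬJ : Finset (Set ℕ) :=
          insert Y (insert (RR A₀) (insert (SS A₀) ((ℬ.erase A₀).image ctil))) with hℬJ
        have hsubA : ↑𝒜J ⊆ insert Y (JJ I A₀) := fun D hD => hJsub (hGA hD)
        have hsubB : ↑ℬJ ⊆ insert Y (JJ I A₀) := by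
          intro D hD
          rcases Finset.mem_insert.1 hD with rfl | hD
          · exact mem_insert _ _
          rcases Finset.mem_insert.1 hD with rfl | hD
          · exact hJsub hRJ
          rcases Finset.mem_insert.1 hD with rfl | hD
          · exact hJsub hSJ
          · exact hJsub (hGB hD)
        have hdj : Disjoint 𝒜J ℬJ := by
          rw [Finset.disjoint_left]
          intro D hD1 hD2
          rw [Finset.mem_image] at hD1
          obtain ⟨B₁, hB₁, rfl⟩ := hD1
          have hB₁ne : B₁ ≠ A₀ := fun h => hA₀𝒜 (h ▸ hB₁)
          rcases Finset.mem_insert.1 hD2 with h | hD2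
          · exact hYnectil B₁ (h𝒜 hB₁) hB₁ne h.symm
          rcases Finset.mem_insert.1 hD2 with h | hD2
          · exact ctil_ne_RR hB₁ne h
          rcases Finset.mem_insert.1 hD2 with h | hD2
          · exact ctil_ne_SS hB₁ne h
          · rw [Finset.mem_image] at hD2
            obtain ⟨B₂, hB₂, h⟩ := hD2
            exact hdisj12 B₁ hB₁ B₂ hB₂ h.symm
        have key := hYind.2 𝒜J ℬJ hsubA hsubB hdj
        refine inf_pull0 key ?_
        intro m hm
        rw [mem_combo] at hm
        have hmY : m ∉ Y := hm.2 Y (Finset.mem_insert_self _ _)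
        have hmR : m ∉ RR A₀ := hm.2 _ (Finset.mem_insert.2 (Or.inr (Finset.mem_insert_self _ _)))
        have hmS : m ∉ SS A₀ := hm.2 _
          (Finset.mem_insert.2 (Or.inr (Finset.mem_insert.2 (Or.inr
            (Finset.mem_insert_self _ _)))))
        obtain ⟨h0, hA0⟩ := RS_neg hmR hmS
        refine ⟨h0, ?_, fun hc => hmY ((dq_mem0 h0).2 hc)⟩
        rw [mem_combo]
        constructor
        · intro A hA
          have := hm.1 (ctil A) (Finset.mem_image_of_mem _ hA)
          rwa [mem_ctil] at this
        · intro B hB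
          by_cases hBA : B = A₀
          · subst hBA; exact hA0
          · intro hmem
            have := hm.2 (ctil B)
              (Finset.mem_insert.2 (Or.inr (Finset.mem_insert.2 (Or.inr (Finset.mem_insert.2
                (Or.inr (Finset.mem_image_of_mem _ (Finset.mem_erase.2 ⟨hBA, hB⟩))))))))
            exact this (mem_ctil.2 hmem)
    · -- A₀ not on the negative side; use RR, SS positively
      have hGB : ↑(ℬ.image ctil) ⊆ JJ I A₀ := by
        intro D hD
        simp only [Finset.coe_image, mem_image, Finset.mem_coe] at hD
        obtain ⟨B, hB, rfl⟩ := hD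
        exact hctilJ B (hℬ hB) (fun h => hA₀ℬ (h ▸ hB))
      have hGA : ↑((𝒜.erase A₀).image ctil) ⊆ JJ I A₀ := by
        intro D hD
        simp only [Finset.coe_image, mem_image, Finset.mem_coe, Finset.mem_erase] at hD
        obtain ⟨B, ⟨hBne, hB⟩, rfl⟩ := hD
        exact hctilJ B (h𝒜 hB) hBne
      have hdisj12 : ∀ B₁ ∈ 𝒜.erase A₀, ∀ B₂ ∈ ℬ, ctil B₁ ≠ ctil B₂ := by
        intro B₁ hB₁ B₂ hB₂ h
        have := ctil_inj h
        subst this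
        exact hd (Finset.mem_of_mem_erase hB₁) hB₂
      have hRnotB : ∀ B ∈ ℬ, RR A₀ ≠ ctil B := by
        intro B hB h
        have hBA : B = A₀ := by simpa using (congrArg dq h).symm
        exact hA₀ℬ (hBA ▸ hB)
      have hSnotB : ∀ B ∈ ℬ, SS A₀ ≠ ctil B := by
        intro B hB h
        have hBA : B = A₀ := by simpa using (congrArg dq h).symm
        exact hA₀ℬ (hBA ▸ hB)
      constructor
      · set 𝒜J : Finset (Set ℕ) :=
          insert Y (insert (RR A₀) (insert (SS A₀) ((𝒜.erase A₀).image ctil))) with h𝒜J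
        set ℬJ : Finset (Set ℕ) := ℬ.image ctil with hℬJ
        have hsubA : ↑𝒜J ⊆ insert Y (JJ I A₀) := by
          intro D hD
          rcases Finset.mem_insert.1 hD with rfl | hD
          · exact mem_insert _ _
          rcases Finset.mem_insert.1 hD with rfl | hD
          · exact hJsub hRJ
          rcases Finset.mem_insert.1 hD with rfl | hD
          · exact hJsub hSJ
          · exact hJsub (hGA hD)
        have hsubB : ↑ℬJ ⊆ insert Y (JJ I A₀) := fun D hD => hJsub (hGB hD)
        have hdj : Disjoint 𝒜J ℬJ := by
          rw [Finset.disjoint_left]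
          intro D hD1 hD2
          rw [hℬJ, Finset.mem_image] at hD2
          obtain ⟨B₂, hB₂, rfl⟩ := hD2
          rcases Finset.mem_insert.1 hD1 with rfl | hD1
          · exact hYnectil B₂ (hℬ hB₂) (fun h => hA₀ℬ (h ▸ hB₂)) rfl
          rcases Finset.mem_insert.1 hD1 with h | hD1
          · exact hRnotB B₂ hB₂ h.symm
          rcases Finset.mem_insert.1 hD1 with h | hD1
          · exact hSnotB B₂ hB₂ h.symm
          · rw [Finset.mem_image] at hD1
            obtain ⟨B₁, hB₁, h⟩ := hD1
            exact hdisj12 B₁ hB₁ B₂ hB₂ (h ▸ rfl)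
        have key := hYind.2 𝒜J ℬJ hsubA hsubB hdj
        refine inf_pull0 key ?_
        intro m hm
        rw [mem_combo] at hm
        have hmY : m ∈ Y := hm.1 Y (Finset.mem_insert_self _ _)
        have hmR : m ∈ RR A₀ := hm.1 _ (Finset.mem_insert.2 (Or.inr (Finset.mem_insert_self _ _)))
        have hmS : m ∈ SS A₀ := hm.1 _
          (Finset.mem_insert.2 (Or.inr (Finset.mem_insert.2 (Or.inr
            (Finset.mem_insert_self _ _)))))
        obtain ⟨h0, hA0⟩ := RS_pos hmR hmS
        refine ⟨h0, ?_, (dq_mem0 h0).1 hmY⟩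
        rw [mem_combo]
        constructor
        · intro A hA
          by_cases hAA : A = A₀
          · subst hAA; exact hA0
          · have := hm.1 (ctil A)
              (Finset.mem_insert.2 (Or.inr (Finset.mem_insert.2 (Or.inr (Finset.mem_insert.2
                (Or.inr (Finset.mem_image_of_mem _ (Finset.mem_erase.2 ⟨hAA, hA⟩))))))))
            rwa [mem_ctil] at this
        · intro B hB hmem
          have := hm.2 (ctil B) (Finset.mem_image_of_mem _ hB)
          exact this (mem_ctil.2 hmem)
      · set 𝒜J : Finset (Set ℕ) :=
          insert (RR A₀) (insert (SS A₀) ((𝒜.erase A₀).image ctil)) with h𝒜J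
        set ℬJ : Finset (Set ℕ) := insert Y (ℬ.image ctil) with hℬJ
        have hsubA : ↑𝒜J ⊆ insert Y (JJ I A₀) := by
          intro D hD
          rcases Finset.mem_insert.1 hD with rfl | hD
          · exact hJsub hRJ
          rcases Finset.mem_insert.1 hD with rfl | hD
          · exact hJsub hSJ
          · exact hJsub (hGA hD)
        have hsubB : ↑ℬJ ⊆ insert Y (JJ I A₀) := by
          intro D hD
          rcases Finset.mem_insert.1 hD with rfl | hD
          · exact mem_insert _ _
          · exact hJsub (hGB hD)
        have hdj : Disjoint 𝒜J ℬJ := by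
          rw [Finset.disjoint_left]
          intro D hD1 hD2
          rcases Finset.mem_insert.1 hD1 with rfl | hD1
          · rcases Finset.mem_insert.1 hD2 with h | hD2
            · exact hYneR h.symm
            · rw [Finset.mem_image] at hD2
              obtain ⟨B₂, hB₂, h⟩ := hD2
              exact hRnotB B₂ hB₂ h.symm
          rcases Finset.mem_insert.1 hD1 with rfl | hD1
          · rcases Finset.mem_insert.1 hD2 with h | hD2
            · exact hYneS h.symm
            · rw [Finset.mem_image] at hD2
              obtain ⟨B₂, hB₂, h⟩ := hD2
              exact hSnotB B₂ hB₂ h.symm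
          · rw [Finset.mem_image] at hD1
            obtain ⟨B₁, hB₁, rfl⟩ := hD1
            rcases Finset.mem_insert.1 hD2 with h | hD2
            · exact hYnectil B₁ (h𝒜 (Finset.mem_of_mem_erase hB₁))
                (Finset.mem_erase.1 hB₁).1 h.symm
            · rw [Finset.mem_image] at hD2
              obtain ⟨B₂, hB₂, h⟩ := hD2
              exact hdisj12 B₁ hB₁ B₂ hB₂ h.symm
        have key := hYind.2 𝒜J ℬJ hsubA hsubB hdj
        refine inf_pull0 key ?_
        intro m hm
        rw [mem_combo] at hm
        have hmY : m ∉ Y := hm.2 Y (Finset.mem_insert_self _ _)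
        have hmR : m ∈ RR A₀ := hm.1 _ (Finset.mem_insert_self _ _)
        have hmS : m ∈ SS A₀ := hm.1 _ (Finset.mem_insert.2 (Or.inr (Finset.mem_insert_self _ _)))
        obtain ⟨h0, hA0⟩ := RS_pos hmR hmS
        refine ⟨h0, ?_, fun hc => hmY ((dq_mem0 h0).2 hc)⟩
        rw [mem_combo]
        constructor
        · intro A hA
          by_cases hAA : A = A₀
          · subst hAA; exact hA0
          · have := hm.1 (ctil A)
              (Finset.mem_insert.2 (Or.inr (Finset.mem_insert.2 (Or.inr
                (Finset.mem_image_of_mem _ (Finset.mem_erase.2 ⟨hAA, hA⟩))))))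
            rwa [mem_ctil] at this
        · intro B hB hmem
          have := hm.2 (ctil B) (Finset.mem_insert.2 (Or.inr (Finset.mem_image_of_mem _ hB)))
          exact this (mem_ctil.2 hmem)
  -- Step 2 : derive a contradiction
  have hZqinf : Zq.Infinite := by
    have := (step1 ∅ ∅ (by simp) (by simp) (by simp)).1
    simpa using this
  by_cases hZqI : Zq ∈ I
  · by_cases hZqA₀ : Zq = A₀
    · -- Y \ (RR ∪ SS) = ∅, contradicting independence
      have key := hYind.2 {Y} {RR A₀, SS A₀}
        (by intro D hD; simp at hD; subst hD; exact mem_insert _ _)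
        (by intro D hD; simp at hD; rcases hD with rfl | rfl
            · exact hJsub hRJ
            · exact hJsub hSJ)
        (by rw [Finset.disjoint_left]; intro D hD1 hD2; simp at hD1 hD2
            subst hD1; rcases hD2 with h | h; exact hYneR h; exact hYneS h)
      obtain ⟨m, hm⟩ := key.nonempty
      rw [mem_combo] at hm
      have hmY : m ∈ Y := hm.1 Y (by simp)
      have hmR : m ∉ RR A₀ := hm.2 _ (by simp)
      have hmS : m ∉ SS A₀ := hm.2 _ (by simp)
      obtain ⟨h0, hA0⟩ := RS_neg hmR hmS
      exact hA0 (hZqA₀ ▸ (dq_mem0 h0).1 hmY)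
    · -- Y ∩ RR ∩ SS \ ctil Zq = ∅
      have key := hYind.2 {Y, RR A₀, SS A₀} {ctil Zq}
        (by intro D hD; simp at hD; rcases hD with rfl | rfl | rfl
            · exact mem_insert _ _
            · exact hJsub hRJ
            · exact hJsub hSJ)
        (by intro D hD; simp at hD; subst hD; exact hJsub (hctilJ Zq hZqI hZqA₀))
        (by rw [Finset.disjoint_left]; intro D hD1 hD2; simp at hD1 hD2
            rcases hD1 with rfl | rfl | rfl
            · exact hYnectil Zq hZqI hZqA₀ hD2
            · exact ctil_ne_RR hZqA₀ hD2.symm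
            · exact ctil_ne_SS hZqA₀ hD2.symm)
      obtain ⟨m, hm⟩ := key.nonempty
      rw [mem_combo] at hm
      have hmY : m ∈ Y := hm.1 Y (by simp)
      have hmR : m ∈ RR A₀ := hm.1 _ (by simp)
      have hmS : m ∈ SS A₀ := hm.1 _ (by simp)
      have hmZ : m ∉ ctil Zq := hm.2 _ (by simp)
      obtain ⟨h0, _⟩ := RS_pos hmR hmS
      rw [mem_ctil] at hmZ
      exact hmZ ((dq_mem0 h0).1 hmY)
  · -- Zq ∉ I : contradicts maximality of I
    refine hI.2 ⟨Zq, hZqinf, hZqI, ?_, ?_⟩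
    · intro A hA
      rcases hA with rfl | hA
      · exact hZqinf
      · exact hI.1.1 A hA
    · intro 𝒜 ℬ h𝒜 hℬ hd
      by_cases hZ𝒜 : Zq ∈ 𝒜
      · have h𝒜' : ↑(𝒜.erase Zq) ⊆ I := by
          intro A hA
          simp only [Finset.coe_erase, mem_diff, mem_singleton_iff] at hA
          rcases h𝒜 hA.1 with rfl | h; · exact absurd rfl hA.2
          · exact h
        have hℬ' : ↑ℬ ⊆ I := by
          intro A hA
          rcases hℬ hA with rfl | h
          · exact absurd hA (Finset.disjoint_left.1 hd hZ𝒜)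
          · exact h
        have key := (step1 (𝒜.erase Zq) ℬ h𝒜' hℬ'
          (hd.mono_left (Finset.erase_subset _ _))).1
        refine key.mono ?_
        intro y hy
        rw [mem_inter_iff, mem_combo] at hy
        rw [mem_combo]
        refine ⟨fun A hA => ?_, hy.1.2⟩
        by_cases hAZ : A = Zq
        · subst hAZ; exact hy.2
        · exact hy.1.1 A (Finset.mem_erase.2 ⟨hAZ, hA⟩)
      · have h𝒜' : ↑𝒜 ⊆ I := by
          intro A hA
          rcases h𝒜 hA with rfl | h; · exact absurd hA hZ𝒜
          · exact h
        by_cases hZℬ : Zq ∈ ℬ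
        · have hℬ' : ↑(ℬ.erase Zq) ⊆ I := by
            intro A hA
            simp only [Finset.coe_erase, mem_diff, mem_singleton_iff] at hA
            rcases hℬ hA.1 with rfl | h; · exact absurd rfl hA.2
            · exact h
          have key := (step1 𝒜 (ℬ.erase Zq) h𝒜' hℬ'
            (hd.mono_right (Finset.erase_subset _ _))).2
          refine key.mono ?_
          intro y hy
          rw [mem_diff, mem_combo] at hy
          rw [mem_combo]
          refine ⟨hy.1.1, fun B hB hyB => ?_⟩
          by_cases hBZ : B = Zq
          · subst hBZ; exact hy.2 hyB
          · exact hy.1.2 B (Finset.mem_erase.2 ⟨hBZ, hB⟩) hyB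
        · have hℬ' : ↑ℬ ⊆ I := by
            intro A hA
            rcases hℬ hA with rfl | h; · exact absurd hA hZℬ
            · exact h
          exact hI.1.2 𝒜 ℬ h𝒜' hℬ' hd

lemma mem_BC {h : Set ℕ → Option Bool} {m : ℕ} :
    m ∈ BC h ↔ ∀ M : Set ℕ, (h M = some false → m ∈ M) ∧ (h M = some true → m ∉ M) := by
  simp only [BC, mem_iInter, mem_setOf_eq]
  constructor
  · intro hm M
    constructor
    · intro hf
      have := hm M (by simp [hf])
      rwa [if_pos hf] at this
    · intro ht
      have := hm M (by simp [ht])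
      rw [if_neg (by simp [ht])] at this
      exact this
  · intro hm M hM
    rcases hb : h M with _ | b
    · exact absurd hb hM
    · cases b
      · rw [if_pos rfl]; exact (hm M).1 hb
      · rw [if_neg (by simp)]; exact (hm M).2 hb

theorem notDM_JJ {I : Set (Set ℕ)} (hI : Indep I) {A₀ : Set ℕ} (hA₀ : A₀ ∈ I) :
    ¬ DenselyMax (JJ I A₀) := by
  classical
  intro hDM
  have hA₀ne : A₀.Nonempty := (hI.1 A₀ hA₀).nonempty
  have hRS : RR A₀ ≠ SS A₀ := RR_ne_SS hA₀ne
  have hSR : SS A₀ ≠ RR A₀ := hRS.symm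
  set X : Set ℕ := TT ∅ ∅ univ with hX
  have hXinf : X.Infinite :=
    infinite_of_sub3 2 Set.infinite_univ (fun a _ => (TT2 a).2 (mem_univ a))
  set h₀ : Set ℕ → Option Bool :=
    fun M => if M = RR A₀ then some true else if M = SS A₀ then some false else none with hh₀
  have hFF₀ : FF (JJ I A₀) h₀ := by
    constructor
    · apply Set.Finite.subset (((finite_singleton (SS A₀)).insert (RR A₀)))
      intro M hM
      simp only [mem_setOf_eq, hh₀] at hM
      by_cases h1 : M = RR A₀
      · exact mem_insert_iff.2 (Or.inl h1)
      by_cases h2 : M = SS A₀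
      · exact mem_insert_iff.2 (Or.inr h2)
      · rw [if_neg h1, if_neg h2] at hM; exact absurd rfl hM
    · intro M hM
      simp only [hh₀] at hM
      by_cases h1 : M = RR A₀
      · subst h1; exact Or.inr (Or.inl rfl)
      by_cases h2 : M = SS A₀
      · subst h2; exact Or.inr (Or.inr rfl)
      · rw [if_neg h1, if_neg h2] at hM; exact absurd rfl hM
  obtain ⟨h', hFF', hExt, hcase⟩ := hDM X hXinf h₀ hFF₀
  have hR' : h' (RR A₀) = some true := hExt _ _ (by simp [hh₀])
  have hS' : h' (SS A₀) = some false := hExt _ _ (by simp [hh₀, hSR])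
  set Sfin := hFF'.1.toFinset with hSfin
  set core := (Sfin.erase (RR A₀)).erase (SS A₀) with hcore
  have hcoreE : ∀ M ∈ core, ∃ B ∈ I, B ≠ A₀ ∧ M = ctil B := by
    intro M hM
    have hM1 : M ≠ SS A₀ := Finset.ne_of_mem_erase hM
    have hM2 : M ≠ RR A₀ := Finset.ne_of_mem_erase (Finset.mem_of_mem_erase hM)
    have hMs : M ∈ Sfin := Finset.mem_of_mem_erase (Finset.mem_of_mem_erase hM)
    rw [hSfin, Set.Finite.mem_toFinset] at hMs
    rcases mem_JJ_elim (hFF'.2 M hMs) with h | h | hB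
    · exact absurd h hM2
    · exact absurd h hM1
    · exact hB
  have hmemcore : ∀ M : Set ℕ, h' M ≠ none → M ≠ RR A₀ → M ≠ SS A₀ → M ∈ core := by
    intro M hM h1 h2
    refine Finset.mem_erase.2 ⟨h2, Finset.mem_erase.2 ⟨h1, ?_⟩⟩
    rw [hSfin, Set.Finite.mem_toFinset]
    exact hM
  -- common disjointness argument
  have hdisjcore : ∀ D : Set ℕ,
      D ∈ (core.filter (fun M => h' M = some false)).image dq →
      D ∈ (core.filter (fun M => h' M = some true)).image dq → False := by
    intro D hD1 hD2
    rw [Finset.mem_image] at hD1 hD2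
    obtain ⟨M₁, hM₁, rfl⟩ := hD1
    obtain ⟨M₂, hM₂, hDM₂⟩ := hD2
    rw [Finset.mem_filter] at hM₁ hM₂
    obtain ⟨B₁, hB₁I, hB₁ne, rfl⟩ := hcoreE M₁ hM₁.1
    obtain ⟨B₂, hB₂I, hB₂ne, rfl⟩ := hcoreE M₂ hM₂.1
    simp only [dq_ctil] at hDM₂
    subst hDM₂
    have hff := hM₁.2.symm.trans hM₂.2
    simp at hff
  have hBsub : ∀ D : Set ℕ, ∀ b : Bool,
      D ∈ (core.filter (fun M => h' M = some b)).image dq → D ∈ I ∧ D ≠ A₀ := by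
    intro D b hD
    rw [Finset.mem_image] at hD
    obtain ⟨M, hM, rfl⟩ := hD
    rw [Finset.mem_filter] at hM
    obtain ⟨B, hBI, hBne, rfl⟩ := hcoreE M hM.1
    rw [dq_ctil]
    exact ⟨hBI, hBne⟩
  -- BC h' ∩ X is infinite
  have hBCX : (BC h' ∩ X).Infinite := by
    set 𝒜2 : Finset (Set ℕ) :=
      insert A₀ ((core.filter (fun M => h' M = some false)).image dq) with h𝒜2
    set ℬ2 : Finset (Set ℕ) := (core.filter (fun M => h' M = some true)).image dq with hℬ2
    have h𝒜2I : ↑𝒜2 ⊆ I := by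
      intro D hD
      rcases Finset.mem_insert.1 hD with rfl | hD
      · exact hA₀
      · exact (hBsub D false hD).1
    have hℬ2I : ↑ℬ2 ⊆ I := fun D hD => (hBsub D true hD).1
    have hdj : Disjoint 𝒜2 ℬ2 := by
      rw [Finset.disjoint_left]
      intro D hD1 hD2
      rcases Finset.mem_insert.1 hD1 with rfl | hD1
      · exact (hBsub D true hD2).2 rfl
      · exact hdisjcore D hD1 hD2
    have key := hI.2 𝒜2 ℬ2 h𝒜2I hℬ2I hdj
    refine infinite_of_sub3 2 key ?_
    intro a ha
    rw [mem_combo] at ha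
    have haA₀ : a ∈ A₀ := ha.1 A₀ (Finset.mem_insert_self _ _)
    constructor
    · rw [mem_BC]
      intro M
      constructor
      · intro hf
        by_cases h1 : M = RR A₀
        · subst h1; rw [hR'] at hf; exact absurd hf (by simp)
        by_cases h2 : M = SS A₀
        · subst h2; exact (TT2 a).2 haA₀
        · obtain ⟨B, hBI, hBne, rfl⟩ := hcoreE M (hmemcore M (by simp [hf]) h1 h2)
          have hBmem : B ∈ 𝒜2 := by
            refine Finset.mem_insert.2 (Or.inr ?_)
            rw [Finset.mem_image]
            exact ⟨ctil B, Finset.mem_filter.2 ⟨hmemcore _ (by simp [hf]) h1 h2, hf⟩, dq_ctil B⟩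
          exact (TT2 a).2 (ha.1 B hBmem)
      · intro ht
        by_cases h1 : M = RR A₀
        · subst h1
          rw [RR, TT2]
          exact fun hc => hc haA₀
        by_cases h2 : M = SS A₀
        · subst h2; rw [hS'] at ht; exact absurd ht (by simp)
        · obtain ⟨B, hBI, hBne, rfl⟩ := hcoreE M (hmemcore M (by simp [ht]) h1 h2)
          have hBmem : B ∈ ℬ2 := by
            rw [hℬ2, Finset.mem_image]
            exact ⟨ctil B, Finset.mem_filter.2 ⟨hmemcore _ (by simp [ht]) h1 h2, ht⟩, dq_ctil B⟩
          rw [ctil, TT2]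
          exact ha.2 B hBmem
    · exact (TT2 a).2 (mem_univ a)
  -- BC h' \ X is infinite
  have hBCdX : (BC h' \ X).Infinite := by
    set 𝒜1 : Finset (Set ℕ) := (core.filter (fun M => h' M = some false)).image dq with h𝒜1
    set ℬ1 : Finset (Set ℕ) :=
      insert A₀ ((core.filter (fun M => h' M = some true)).image dq) with hℬ1
    have h𝒜1I : ↑𝒜1 ⊆ I := fun D hD => (hBsub D false hD).1
    have hℬ1I : ↑ℬ1 ⊆ I := by
      intro D hD
      rcases Finset.mem_insert.1 hD with rfl | hD
      · exact hA₀
      · exact (hBsub D true hD).1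
    have hdj : Disjoint 𝒜1 ℬ1 := by
      rw [Finset.disjoint_left]
      intro D hD1 hD2
      rcases Finset.mem_insert.1 hD2 with rfl | hD2
      · exact (hBsub D false hD1).2 rfl
      · exact hdisjcore D hD1 hD2
    have key := hI.2 𝒜1 ℬ1 h𝒜1I hℬ1I hdj
    refine infinite_of_sub3 1 key ?_
    intro a ha
    rw [mem_combo] at ha
    have haA₀ : a ∉ A₀ := ha.2 A₀ (Finset.mem_insert_self _ _)
    constructor
    · rw [mem_BC]
      intro M
      constructor
      · intro hf
        by_cases h1 : M = RR A₀
        · subst h1; rw [hR'] at hf; exact absurd hf (by simp)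
        by_cases h2 : M = SS A₀
        · subst h2
          rw [SS, TT1]
          exact haA₀
        · obtain ⟨B, hBI, hBne, rfl⟩ := hcoreE M (hmemcore M (by simp [hf]) h1 h2)
          have hBmem : B ∈ 𝒜1 := by
            rw [h𝒜1, Finset.mem_image]
            exact ⟨ctil B, Finset.mem_filter.2 ⟨hmemcore _ (by simp [hf]) h1 h2, hf⟩, dq_ctil B⟩
          exact (TT1 a).2 (ha.1 B hBmem)
      · intro ht
        by_cases h1 : M = RR A₀
        · subst h1
          rw [RR, TT1]
          exact haA₀
        by_cases h2 : M = SS A₀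
        · subst h2; rw [hS'] at ht; exact absurd ht (by simp)
        · obtain ⟨B, hBI, hBne, rfl⟩ := hcoreE M (hmemcore M (by simp [ht]) h1 h2)
          have hBmem : B ∈ ℬ1 := by
            refine Finset.mem_insert.2 (Or.inr ?_)
            rw [Finset.mem_image]
            exact ⟨ctil B, Finset.mem_filter.2 ⟨hmemcore _ (by simp [ht]) h1 h2, ht⟩, dq_ctil B⟩
          rw [ctil, TT1]
          exact ha.2 B hBmem
    · rw [hX, TT1]
      exact fun hc => hc
  rcases hcase with hfin | hfin
  · exact hBCdX hfin
  · exact hBCX hfin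

lemma mk_JJ {I : Set (Set ℕ)} (hIinf : I.Infinite) {A₀ : Set ℕ} (hA₀ : A₀ ∈ I) :
    Cardinal.mk (JJ I A₀) = Cardinal.mk I := by
  have hinj : Function.Injective ctil := fun a b h => ctil_inj h
  have h1 : Cardinal.mk ↥(ctil '' (I \ {A₀})) = Cardinal.mk ↥(I \ {A₀}) :=
    Cardinal.mk_image_eq hinj
  have hdiffinf : (I \ {A₀}).Infinite := hIinf.diff (finite_singleton A₀)
  have haleph : Cardinal.aleph0 ≤ Cardinal.mk ↥(I \ {A₀}) :=
    Cardinal.infinite_iff.1 (Set.infinite_coe_iff.2 hdiffinf)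
  have h2 : Cardinal.mk ↥(I \ {A₀}) = Cardinal.mk ↥I := by
    have h3 := Cardinal.mk_diff_add_mk (S := I) (T := {A₀}) (by simpa using hA₀)
    rw [Cardinal.mk_singleton] at h3
    rw [← h3, Cardinal.add_one_eq haleph]
  apply le_antisymm
  · have hpair : Cardinal.mk ↥({RR A₀, SS A₀} : Set (Set ℕ)) ≤ Cardinal.aleph0 :=
      le_of_lt (Set.Finite.lt_aleph0 ((finite_singleton _).insert _))
    calc Cardinal.mk ↥(JJ I A₀)
        ≤ Cardinal.mk ↥(ctil '' (I \ {A₀})) + Cardinal.mk ↥({RR A₀, SS A₀} : Set (Set ℕ)) :=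
          Cardinal.mk_union_le _ _
      _ = Cardinal.mk ↥(ctil '' (I \ {A₀})) :=
          Cardinal.add_eq_left (h1 ▸ haleph) (hpair.trans (h1 ▸ haleph))
      _ = Cardinal.mk ↥I := h1.trans h2
  · rw [← h2, ← h1]
    exact Cardinal.mk_le_mk_of_subset subset_union_left

theorem statement9 (κ : Cardinal)
    (h : ∃ I : Set (Set ℕ), MaxIndep I ∧ Cardinal.mk I = κ) :
    ∃ J : Set (Set ℕ), MaxIndep J ∧ Cardinal.mk J = κ ∧ ¬ DenselyMax J := by
  obtain ⟨I, hI, hmk⟩ := h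
  have hIinf : I.Infinite := maxIndep_infinite hI
  obtain ⟨A₀, hA₀⟩ := hIinf.nonempty
  exact ⟨JJ I A₀, ⟨indep_JJ hI.1 hA₀, maxJJ hI hA₀⟩, (mk_JJ hIinf hA₀).trans hmk,
    notDM_JJ hI.1 hA₀⟩
end
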